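/- arXiv:2110.14872 — 5 statements merged into one kernel-verified Lean document; each statement's English description precedes it below -/
import Mathlib

section
/- Let A(p1,...,pn) be a classical propositional formula containing only the indicated propositional variables, and let r be a propositional variable not occurring in A. If A is contingent (neither a tautology nor unsatisfiable), then there exist propositional formulas B1(r), ..., Bn(r) such that r ↔ A(B1(r), ..., Bn(r)) is a tautology. -/
/-- Classical propositional formulas over variable type `α`. -/
inductive PropForm (α : Type) : Type
  | var : α → PropForm α
  | fal : PropForm α
  | imp : PropForm α → PropForm α → PropForm α

namespace PropForm

variable {α β : Type}

def neg (A : PropForm α) : PropForm α := imp A fal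
def top : PropForm α := neg fal
def conj (A B : PropForm α) : PropForm α := neg (imp A (neg B))
def disj (A B : PropForm α) : PropForm α := imp (neg A) B
def biimp (A B : PropForm α) : PropForm α := conj (imp A B) (imp B A)
/-- `⊤^1 = ⊤`, `⊤^0 = ⊥`. -/
def const (b : Bool) : PropForm α := if b then top else fal

def eval (v : α → Bool) : PropForm α → Bool
  | var a => v a
  | fal => false
  | imp A B => !(eval v A) || eval v B

/-- Simultaneous substitution. -/
def subst (s : α → PropForm β) : PropForm α → PropForm β
  | var a => s a
  | fal => fal
  | imp A B => imp (subst s A) (subst s B)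

def Taut (A : PropForm α) : Prop := ∀ v, eval v A = true
def Unsat (A : PropForm α) : Prop := ∀ v, eval v A = false
def Contingent (A : PropForm α) : Prop := ¬ Taut A ∧ ¬ Unsat A

theorem eval_subst (s : α → PropForm β) (w : β → Bool) (A : PropForm α) :
    eval w (subst s A) = eval (fun a => eval w (s a)) A := by
  induction A with
  | var a => rfl
  | fal => rfl
  | imp A B ihA ihB => simp [subst, eval, ihA, ihB]

end PropForm

/-- if `A(p₁,…,pₙ)` is contingent, then there are formulas
`B₁(r),…,Bₙ(r)` (in the single fresh variable `r`) such that
`r ↔ A(B₁(r),…,Bₙ(r))` is a tautology. -/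
theorem contingent_subst_iff_var (n : ℕ) (A : PropForm (Fin n))
    (hA : A.Contingent) :
    ∃ B : Fin n → PropForm Unit,
      PropForm.Taut (PropForm.biimp (PropForm.var ()) (A.subst B)) := by
  obtain ⟨hnt, hnu⟩ := hA
  simp only [PropForm.Taut, PropForm.Unsat, not_forall] at hnt hnu
  obtain ⟨v0, hv0⟩ := hnt
  obtain ⟨v1, hv1⟩ := hnu
  rw [Bool.not_eq_true] at hv0
  rw [Bool.not_eq_false] at hv1
  refine ⟨fun i => if v1 i then (if v0 i then PropForm.top else PropForm.var ())
      else (if v0 i then PropForm.imp (PropForm.var ()) PropForm.fal else PropForm.fal), ?_⟩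
  intro w
  have h : PropForm.eval w (PropForm.subst (fun i =>
      if v1 i then (if v0 i then PropForm.top else PropForm.var ())
      else (if v0 i then PropForm.imp (PropForm.var ()) PropForm.fal else PropForm.fal)) A) = PropForm.eval (if w () then v1 else v0) A := by
    rw [PropForm.eval_subst]
    congr 1
    funext i
    cases hb : w () <;> cases h1 : v1 i <;> cases h0 : v0 i <;>
      simp [hb, h1, h0, PropForm.eval, PropForm.top, PropForm.neg]
  simp only [PropForm.biimp, PropForm.conj, PropForm.neg, PropForm.eval, h]
  cases hb : w () <;> simp [hb, hv0, hv1]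
end

section
/- Let T be a consistent c.e. extension of PA and A(p1,...,pn) a classical propositional formula. If A is contingent, then for every Σ1 sentence σ there exist arithmetic sentences φ1,...,φn such that PA + Con_T proves σ ↔ Pr_T(⌜A(φ1,...,φn)⌝). Conversely, if A is not contingent, then there is a Σ1 sentence σ for which no such φ1,...,φn exist. -/
/-- An abstract setting for the arithmetic of provability: a type of sentences
of the language of arithmetic with falsity and implication, a provability
predicate `pr` (the sentence `Pr_T(⌜·⌝)`), provability in PA and in the fixed
consistent c.e. extension `T` of PA, the class of Σ₁ sentences, and truth in
the standard model ℕ. -/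
structure PASetup where
  Sent : Type
  fal : Sent
  imp : Sent → Sent → Sent
  pr : Sent → Sent
  PAPrv : Sent → Prop
  TPrv : Sent → Prop
  Sigma1 : Sent → Prop
  TrueN : Sent → Prop

namespace PASetup

def neg (S : PASetup) (A : S.Sent) : S.Sent := S.imp A S.fal
def conj (S : PASetup) (A B : S.Sent) : S.Sent := S.neg (S.imp A (S.neg B))
def disj (S : PASetup) (A B : S.Sent) : S.Sent := S.imp (S.neg A) B
def biimp (S : PASetup) (A B : S.Sent) : S.Sent := S.conj (S.imp A B) (S.imp B A)
/-- `Con_T := ¬Pr_T(⌜0=1⌝)`. -/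
def con (S : PASetup) : S.Sent := S.neg (S.pr S.fal)
/-- Provability in `PA + Con_T` (via the deduction theorem). -/
def PAConPrv (S : PASetup) (A : S.Sent) : Prop := S.PAPrv (S.imp S.con A)

/-- Iterated consistency statements: `Con_T^0 := (0=0)`,
`Con_T^{n+1} := ¬Pr_T(⌜¬Con_T^n⌝)`. -/
def conIter (S : PASetup) : ℕ → S.Sent
  | 0 => S.neg S.fal
  | n+1 => S.neg (S.pr (S.neg (conIter S n)))

/-- `A` is an instance of a propositional tautology. -/
def TautInst (S : PASetup) (A : S.Sent) : Prop :=
  ∀ v : S.Sent → Bool, (∀ B C, v (S.imp B C) = (!(v B) || v C)) →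
    v S.fal = false → v A = true

/-- The standard facts assumed about `PA`, `T`, and the natural Σ₁ provability
predicate `Pr_T` (closure under propositional logic, consistency of `T`, the
Hilbert–Bernays–Löb derivability conditions, provable Σ₁-completeness, Löb's
theorem, soundness of PA, and the semantics of truth in ℕ). -/
structure Facts (S : PASetup) : Prop where
  pa_taut : ∀ A, S.TautInst A → S.PAPrv A
  pa_mp : ∀ A B, S.PAPrv (S.imp A B) → S.PAPrv A → S.PAPrv B
  pa_t : ∀ A, S.PAPrv A → S.TPrv A
  t_taut : ∀ A, S.TautInst A → S.TPrv A
  t_mp : ∀ A B, S.TPrv (S.imp A B) → S.TPrv A → S.TPrv B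
  t_con : ¬ S.TPrv S.fal
  d1 : ∀ A, S.TPrv A → S.PAPrv (S.pr A)
  d2 : ∀ A B, S.PAPrv (S.imp (S.pr (S.imp A B)) (S.imp (S.pr A) (S.pr B)))
  d3 : ∀ A, S.Sigma1 A → S.PAPrv (S.imp A (S.pr A))
  sigma1_pr : ∀ A, S.Sigma1 (S.pr A)
  sigma1_fal : S.Sigma1 S.fal
  sigma1_top : S.Sigma1 (S.neg S.fal)
  prv_of_incon : ∀ A, S.PAPrv (S.imp (S.neg S.con) (S.pr A))
  lob : ∀ A, S.TPrv (S.imp (S.pr A) A) → S.TPrv A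
  pa_sound : ∀ A, S.PAPrv A → S.TrueN A
  true_imp : ∀ A B, S.TrueN (S.imp A B) ↔ (S.TrueN A → S.TrueN B)
  true_fal : ¬ S.TrueN S.fal
  true_pr : ∀ A, S.TrueN (S.pr A) ↔ S.TPrv A

end PASetup

/-- Substitution of arithmetic sentences for the variables of a propositional
formula. -/
def PASetup.interp (S : PASetup) {α : Type} (g : α → S.Sent) : PropForm α → S.Sent
  | PropForm.var a => g a
  | PropForm.fal => S.fal
  | PropForm.imp A B => S.imp (S.interp g A) (S.interp g B)

section FGHAux

variable {S : PASetup}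

lemma PASetup.interp_eval (S : PASetup) {α : Type} (v : S.Sent → Bool)
    (himp : ∀ B C, v (S.imp B C) = (!(v B) || v C)) (hfal : v S.fal = false)
    (g : α → S.Sent) (A : PropForm α) :
    v (S.interp g A) = A.eval (fun i => v (g i)) := by
  induction A with
  | var a => rfl
  | fal => exact hfal
  | imp A B ihA ihB => simp [PASetup.interp, PropForm.eval, himp, ihA, ihB]

/-- Pr-congruence: from `PA ⊢ X ↔ Y` get `PA ⊢ Pr X → Pr Y`. -/
lemma pr_mono (hS : S.Facts) (X Y : S.Sent) (h : S.PAPrv (S.biimp X Y)) :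
    S.PAPrv (S.imp (S.pr X) (S.pr Y)) := by
  have taut : S.TautInst (S.imp (S.biimp X Y) (S.imp X Y)) := by
    intro v himp hfal
    simp only [PASetup.biimp, PASetup.conj, PASetup.neg, himp, hfal]
    cases v X <;> cases v Y <;> rfl
  have hXY : S.PAPrv (S.imp X Y) := hS.pa_mp _ _ (hS.pa_taut _ taut) h
  have hpr : S.PAPrv (S.pr (S.imp X Y)) := hS.d1 _ (hS.pa_t _ hXY)
  exact hS.pa_mp _ _ (hS.d2 X Y) hpr

lemma biimp_symm (hS : S.Facts) (X Y : S.Sent) (h : S.PAPrv (S.biimp X Y)) :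
    S.PAPrv (S.biimp Y X) := by
  have taut : S.TautInst (S.imp (S.biimp X Y) (S.biimp Y X)) := by
    intro v himp hfal
    simp only [PASetup.biimp, PASetup.conj, PASetup.neg, himp, hfal]
    cases v X <;> cases v Y <;> rfl
  exact hS.pa_mp _ _ (hS.pa_taut _ taut) h

/-- Replace `Y` by a provably-equivalent `X` on the right of the FGH biconditional. -/
lemma fgh_replace (hS : S.Facts) (σ X Y : S.Sent)
    (h1 : S.PAPrv (S.imp S.con (S.biimp σ Y)))
    (h2 : S.PAPrv (S.imp X Y)) (h3 : S.PAPrv (S.imp Y X)) :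
    S.PAPrv (S.imp S.con (S.biimp σ X)) := by
  have taut : S.TautInst (S.imp (S.imp S.con (S.biimp σ Y))
      (S.imp (S.imp X Y) (S.imp (S.imp Y X) (S.imp S.con (S.biimp σ X))))) := by
    intro v himp hfal
    simp only [PASetup.biimp, PASetup.conj, PASetup.neg, PASetup.con, himp, hfal]
    cases v σ <;> cases v X <;> cases v Y <;> cases v (S.pr S.fal) <;> rfl
  exact hS.pa_mp _ _ (hS.pa_mp _ _ (hS.pa_mp _ _ (hS.pa_taut _ taut) h1) h2) h3

lemma fgh_of_prv (hS : S.Facts) (σ X : S.Sent)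
    (h1 : S.PAPrv (S.imp S.con (S.biimp σ (S.pr X))))
    (h2 : S.PAPrv (S.pr X)) : S.PAPrv (S.imp S.con σ) := by
  have taut : S.TautInst (S.imp (S.imp S.con (S.biimp σ (S.pr X)))
      (S.imp (S.pr X) (S.imp S.con σ))) := by
    intro v himp hfal
    simp only [PASetup.biimp, PASetup.conj, PASetup.neg, PASetup.con, himp, hfal]
    cases v σ <;> cases v (S.pr X) <;> cases v (S.pr S.fal) <;> rfl
  exact hS.pa_mp _ _ (hS.pa_mp _ _ (hS.pa_taut _ taut) h1) h2

lemma fgh_of_refut (hS : S.Facts) (σ X : S.Sent)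
    (h1 : S.PAPrv (S.imp S.con (S.biimp σ (S.pr X))))
    (h2 : S.PAPrv (S.imp (S.pr X) (S.pr S.fal))) :
    S.PAPrv (S.imp S.con (S.neg σ)) := by
  have taut : S.TautInst (S.imp (S.imp S.con (S.biimp σ (S.pr X)))
      (S.imp (S.imp (S.pr X) (S.pr S.fal)) (S.imp S.con (S.neg σ)))) := by
    intro v himp hfal
    simp only [PASetup.biimp, PASetup.conj, PASetup.neg, PASetup.con, himp, hfal]
    cases v σ <;> cases v (S.pr X) <;> cases v (S.pr S.fal) <;> rfl
  exact hS.pa_mp _ _ (hS.pa_mp _ _ (hS.pa_taut _ taut) h1) h2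

end FGHAux

/-- assuming the FGH theorem and a Σ₁ sentence independent of
`PA + Con_T`: `A(p₁,…,pₙ)` is contingent iff for every Σ₁ sentence `σ` there
are sentences `φ₁,…,φₙ` with `PA + Con_T ⊢ σ ↔ Pr_T(⌜A(φ₁,…,φₙ)⌝)`; if `A` is
not contingent there is a Σ₁ sentence for which no such sentences exist. -/
theorem fgh_prop_form (S : PASetup) (hS : S.Facts)
    (fgh : ∀ σ, S.Sigma1 σ → ∃ φ, S.PAConPrv (S.biimp σ (S.pr φ)))
    (indep : ∃ σ, S.Sigma1 σ ∧ ¬ S.PAConPrv σ ∧ ¬ S.PAConPrv (S.neg σ))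
    (n : ℕ) (A : PropForm (Fin n)) :
    (A.Contingent →
      ∀ σ, S.Sigma1 σ → ∃ φ : Fin n → S.Sent,
        S.PAConPrv (S.biimp σ (S.pr (S.interp φ A)))) ∧
    (¬ A.Contingent →
      ∃ σ, S.Sigma1 σ ∧ ∀ φ : Fin n → S.Sent,
        ¬ S.PAConPrv (S.biimp σ (S.pr (S.interp φ A)))) := by
  constructor
  · -- contingent case
    rintro ⟨hnt, hnu⟩ σ hσ
    -- valuations witnessing contingency
    have hvt : ∃ vt, A.eval vt = true := by
      by_contra h
      push_neg at h
      exact hnu (fun v => by simpa using h v)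
    have hvf : ∃ vf, A.eval vf = false := by
      by_contra h
      push_neg at h
      exact hnt (fun v => by simpa using h v)
    obtain ⟨vt, hvt⟩ := hvt
    obtain ⟨vf, hvf⟩ := hvf
    obtain ⟨θ, hθ⟩ := fgh σ hσ
    refine ⟨fun i => if vt i then (if vf i then S.neg S.fal else θ)
      else (if vf i then S.neg θ else S.fal), ?_⟩
    set φ : Fin n → S.Sent := fun i => if vt i then (if vf i then S.neg S.fal else θ)
      else (if vf i then S.neg θ else S.fal) with hφ
    -- PA ⊢ interp φ A ↔ θ  (as a tautology instance)
    have taut : S.TautInst (S.biimp (S.interp φ A) θ) := by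
      intro v himp hfal
      have hval : (fun i => v (φ i)) = (fun i => if v θ then vt i else vf i) := by
        funext i
        cases hv : vt i <;> cases hw : vf i <;> cases hθv : v θ <;>
          simp [hφ, hv, hw, hθv, PASetup.neg, himp, hfal]
      have hA : v (S.interp φ A) = v θ := by
        rw [S.interp_eval v himp hfal φ A, hval]
        cases hθv : v θ
        · simpa using hvf
        · simpa using hvt
      simp only [PASetup.biimp, PASetup.conj, PASetup.neg, himp, hfal, hA]
      cases v θ <;> rfl
    have hbi : S.PAPrv (S.biimp (S.interp φ A) θ) := hS.pa_taut _ taut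
    have h2 : S.PAPrv (S.imp (S.pr (S.interp φ A)) (S.pr θ)) := pr_mono hS _ _ hbi
    have h3 : S.PAPrv (S.imp (S.pr θ) (S.pr (S.interp φ A))) :=
      pr_mono hS _ _ (biimp_symm hS _ _ hbi)
    exact fgh_replace hS σ _ _ hθ h2 h3
  · -- non-contingent case
    intro hc
    obtain ⟨σ, hσ1, hσ2, hσ3⟩ := indep
    refine ⟨σ, hσ1, fun φ h => ?_⟩
    by_cases ht : A.Taut
    · -- A is a tautology: Pr(A(φ)) is PA-provable
      have taut : S.TautInst (S.interp φ A) := by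
        intro v himp hfal
        rw [S.interp_eval v himp hfal φ A]
        exact ht _
      have hpr : S.PAPrv (S.pr (S.interp φ A)) := hS.d1 _ (hS.t_taut _ taut)
      exact hσ2 (fgh_of_prv hS σ _ h hpr)
    · have hu : A.Unsat := by
        by_contra hu
        exact hc ⟨ht, hu⟩
      -- A is unsatisfiable: T ⊢ ¬A(φ)
      have taut : S.TautInst (S.neg (S.interp φ A)) := by
        intro v himp hfal
        simp only [PASetup.neg, himp, hfal]
        rw [S.interp_eval v himp hfal φ A, hu]
        rfl
      have hpr : S.PAPrv (S.pr (S.imp (S.interp φ A) S.fal)) :=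
        hS.d1 _ (hS.t_taut _ taut)
      have h2 : S.PAPrv (S.imp (S.pr (S.interp φ A)) (S.pr S.fal)) :=
        hS.pa_mp _ _ (hS.d2 (S.interp φ A) S.fal) hpr
      exact hσ3 (fgh_of_refut hS σ _ h h2)
end

section
/- Let T be a consistent c.e. extension of PA. For any Σ1 sentences σ0 and σ1: if there exist a Rosser provability predicate Pr_T^R(x) of T and a sentence φ such that PA proves σ0 ↔ Pr_T^R(⌜φ⌝) and PA proves σ1 ↔ Pr_T^R(⌜¬φ⌝), then PA proves ¬(σ0 ∧ σ1) and PA proves ¬Con_T → (σ0 ∨ σ1). -/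
/-- An abstract Rosser provability predicate of `T`: `prR φ` is the sentence
`Pr_T^R(⌜φ⌝)` and `prRd ψ` is the dual witness-comparison sentence
`Pr_T^Ř(⌜ψ⌝)` (used with `ψ = ¬φ`), both Σ₁, satisfying the PA-provable
witness-comparison facts. -/
structure Rosser (S : PASetup) where
  prR : S.Sent → S.Sent
  prRd : S.Sent → S.Sent
  sigma1_prR : ∀ φ, S.Sigma1 (prR φ)
  sigma1_prRd : ∀ φ, S.Sigma1 (prRd φ)
  excl : ∀ φ, S.PAPrv (S.neg (S.conj (prR φ) (prRd (S.neg φ))))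
  cover : ∀ φ, S.PAPrv (S.imp (S.disj (S.pr φ) (S.pr (S.neg φ)))
    (S.disj (prR φ) (prRd (S.neg φ))))

/-- if some Rosser provability predicate of `T` and some sentence
`φ` satisfy `PA ⊢ σ₀ ↔ Pr_T^R(⌜φ⌝)` and `PA ⊢ σ₁ ↔ Pr_T^Ř(⌜¬φ⌝)`, then
`PA ⊢ ¬(σ₀ ∧ σ₁)` and `PA ⊢ ¬Con_T → σ₀ ∨ σ₁`. -/
theorem rosser_fgh_necessary (S : PASetup) (hS : S.Facts)
    (σ0 σ1 : S.Sent) (h0 : S.Sigma1 σ0) (h1 : S.Sigma1 σ1)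
    (h : ∃ (R : Rosser S) (φ : S.Sent),
      S.PAPrv (S.biimp σ0 (R.prR φ)) ∧ S.PAPrv (S.biimp σ1 (R.prRd (S.neg φ)))) :
    S.PAPrv (S.neg (S.conj σ0 σ1)) ∧
    S.PAPrv (S.imp (S.neg S.con) (S.disj σ0 σ1)) := by
  obtain ⟨R, φ, hb0, hb1⟩ := h
  constructor
  · have taut : S.TautInst (S.imp (S.biimp σ0 (R.prR φ))
        (S.imp (S.biimp σ1 (R.prRd (S.neg φ)))
          (S.imp (S.neg (S.conj (R.prR φ) (R.prRd (S.neg φ))))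
            (S.neg (S.conj σ0 σ1))))) := by
      intro v himp hfal
      simp only [PASetup.biimp, PASetup.conj, PASetup.neg, himp, hfal]
      cases v σ0 <;> cases v σ1 <;> cases v (R.prR φ) <;>
        cases v (R.prRd (S.imp φ S.fal)) <;> rfl
    exact hS.pa_mp _ _ (hS.pa_mp _ _ (hS.pa_mp _ _ (hS.pa_taut _ taut) hb0) hb1)
      (R.excl φ)
  · have taut : S.TautInst (S.imp (S.biimp σ0 (R.prR φ))
        (S.imp (S.biimp σ1 (R.prRd (S.neg φ)))
          (S.imp (S.imp (S.neg S.con) (S.pr φ))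
            (S.imp (S.imp (S.disj (S.pr φ) (S.pr (S.neg φ)))
                (S.disj (R.prR φ) (R.prRd (S.neg φ))))
              (S.imp (S.neg S.con) (S.disj σ0 σ1)))))) := by
      intro v himp hfal
      simp only [PASetup.biimp, PASetup.conj, PASetup.neg, PASetup.disj,
        PASetup.con, himp, hfal]
      cases v σ0 <;> cases v σ1 <;> cases v (R.prR φ) <;>
        cases v (R.prRd (S.imp φ S.fal)) <;> cases v (S.pr φ) <;>
        cases v (S.pr (S.imp φ S.fal)) <;> cases v (S.pr S.fal) <;> rfl
    exact hS.pa_mp _ _ (hS.pa_mp _ _ (hS.pa_mp _ _ (hS.pa_mp _ _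
      (hS.pa_taut _ taut) hb0) hb1) (hS.prv_of_incon φ)) (R.cover φ)
end

section
/- Let T be a consistent c.e. extension of PA. There exists a Σ1 sentence σ such that for every Σ1 sentence σ', it is not the case that both PA ⊢ ¬(σ ∧ σ') and PA ⊢ ¬Con_T → (σ ∨ σ'). Consequently, for every Rosser provability predicate Pr_T^R of T and every sentence φ, PA does not prove σ ↔ Pr_T^R(⌜φ⌝). -/
/-- `σ` is Π₁-conservative over PA: every Π₁ consequence of `PA + σ` is
PA-provable. -/
def Pi1Conservative (S : PASetup) (Pi1 : S.Sent → Prop) (σ : S.Sent) : Prop :=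
  ∀ π, Pi1 π → S.PAPrv (S.imp σ π) → S.PAPrv π

/-- assuming Guaspari's theorem: there is a Σ₁ sentence `σ` such
that no Σ₁ sentence `σ'` satisfies both `PA ⊢ ¬(σ ∧ σ')` and
`PA ⊢ ¬Con_T → σ ∨ σ'`; consequently no Rosser provability predicate of `T`
and sentence `φ` satisfy `PA ⊢ σ ↔ Pr_T^R(⌜φ⌝)`. -/
theorem no_rosser_fgh (S : PASetup) (hS : S.Facts)
    (Pi1 : S.Sent → Prop)
    (pi1_neg_sigma1 : ∀ σ, S.Sigma1 σ → Pi1 (S.neg σ))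
    (guaspari : ∃ σ, S.Sigma1 σ ∧ Pi1Conservative S Pi1 σ ∧
      ¬ S.PAPrv (S.imp (S.neg S.con) σ)) :
    ∃ σ, S.Sigma1 σ ∧
      (∀ σ', S.Sigma1 σ' →
        ¬ (S.PAPrv (S.neg (S.conj σ σ')) ∧
           S.PAPrv (S.imp (S.neg S.con) (S.disj σ σ')))) ∧
      (∀ (R : Rosser S) (φ : S.Sent), ¬ S.PAPrv (S.biimp σ (R.prR φ))) := by
  obtain ⟨σ, hσ1, hσcons, hσnot⟩ := guaspari
  have key : ∀ σ', S.Sigma1 σ' →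
      ¬ (S.PAPrv (S.neg (S.conj σ σ')) ∧
         S.PAPrv (S.imp (S.neg S.con) (S.disj σ σ'))) := by
    rintro σ' hσ' ⟨h1, h2⟩
    have t1 : S.PAPrv (S.imp σ (S.neg σ')) := by
      refine hS.pa_mp _ _ (hS.pa_taut _ ?_) h1
      intro v hi hf
      simp only [PASetup.neg, PASetup.conj, PASetup.disj, PASetup.biimp,
        PASetup.con, hi, hf]
      generalize v σ = a; generalize v σ' = b
      revert a b; decide
    have t2 : S.PAPrv (S.neg σ') := hσcons _ (pi1_neg_sigma1 _ hσ') t1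
    have t3 : S.PAPrv (S.imp (S.neg S.con) σ) := by
      refine hS.pa_mp _ _ (hS.pa_mp _ _ (hS.pa_taut _ ?_) h2) t2
      intro v hi hf
      simp only [PASetup.neg, PASetup.conj, PASetup.disj, PASetup.biimp,
        PASetup.con, hi, hf]
      generalize v σ = a; generalize v σ' = b; generalize v (S.pr S.fal) = c
      revert a b c; decide
    exact hσnot t3
  refine ⟨σ, hσ1, key, ?_⟩
  intro R φ hb
  refine key (R.prRd (S.neg φ)) (R.sigma1_prRd _) ⟨?_, ?_⟩
  · refine hS.pa_mp _ _ (hS.pa_mp _ _ (hS.pa_taut _ ?_) hb) (R.excl φ)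
    intro v hi hf
    simp only [PASetup.neg, PASetup.conj, PASetup.disj, PASetup.biimp,
      PASetup.con, hi, hf]
    generalize v σ = a; generalize v (R.prR φ) = b
    generalize v (R.prRd (S.imp φ S.fal)) = c
    revert a b c; decide
  · refine hS.pa_mp _ _ (hS.pa_mp _ _ (hS.pa_mp _ _ (hS.pa_taut _ ?_) hb)
      (R.cover φ)) (hS.prv_of_incon φ)
    intro v hi hf
    simp only [PASetup.neg, PASetup.conj, PASetup.disj, PASetup.biimp,
      PASetup.con, hi, hf]
    generalize v σ = a; generalize v (R.prR φ) = b
    generalize v (R.prRd (S.imp φ S.fal)) = c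
    generalize v (S.pr φ) = d; generalize v (S.pr (S.imp φ S.fal)) = e
    generalize v (S.pr S.fal) = f
    revert a b c d e f; decide
end

section
/- Let T be a consistent c.e. extension of PA and suppose the height of T is greater than or equal to s, where the height of T is the least k ≥ 1 with T ⊢ ¬Con_T^k (or ∞ if none exists), with Con_T^0 := (0=0) and Con_T^{n+1} := ¬Pr_T(⌜¬Con_T^n⌝). Then the theory PA + ¬Con_T^{s+1} + Con_T^s is consistent. -/
/-- if the height of `T` is ≥ `s` (i.e. `T ⊬ ¬Con_T^k` for every
`k < s`), then `PA + ¬Con_T^{s+1} + Con_T^s` is consistent. -/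
theorem pa_plus_height_consistent (S : PASetup) (hS : S.Facts) (s : ℕ)
    (height : ∀ k, k < s → ¬ S.TPrv (S.neg (S.conIter k))) :
    ¬ S.PAPrv (S.imp (S.neg (S.conIter (s+1))) (S.imp (S.conIter s) S.fal)) := by
  intro hPA
  by_cases hs : S.TPrv (S.neg (S.conIter s))
  · -- height exactly s: use soundness of PA over ℕ
    cases s with
    | zero =>
      -- then T ⊢ ¬(⊥→⊥), so T ⊢ ⊥, contradicting consistency
      apply hS.t_con
      refine hS.t_mp _ _ hs (hS.t_taut _ ?_)
      intro v hv hf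
      show v (S.imp S.fal S.fal) = true
      rw [hv, hf]; rfl
    | succ k =>
      have htrue := hS.pa_sound _ hPA
      rw [hS.true_imp] at htrue
      have h1 : S.TrueN (S.neg (S.conIter (k+1+1))) := by
        show S.TrueN (S.imp _ S.fal)
        rw [hS.true_imp]
        intro hc
        rw [show S.conIter (k+1+1) = S.imp (S.pr (S.neg (S.conIter (k+1)))) S.fal from rfl,
          hS.true_imp, hS.true_pr] at hc
        exact (hS.true_fal (hc hs)).elim
      have h2 : S.TrueN (S.conIter (k+1)) := by
        rw [show S.conIter (k+1) = S.imp (S.pr (S.neg (S.conIter k))) S.fal from rfl,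
          hS.true_imp, hS.true_pr]
        intro hp
        exact (height k (Nat.lt_succ_self k) hp).elim
      exact hS.true_fal ((hS.true_imp _ _).mp (htrue h1) h2)
  · -- height > s: use Löb's theorem
    apply hs
    apply hS.lob
    have hT := hS.pa_t _ hPA
    have taut : S.TPrv (S.imp (S.imp (S.neg (S.conIter (s+1))) (S.imp (S.conIter s) S.fal))
        (S.imp (S.pr (S.neg (S.conIter s))) (S.neg (S.conIter s)))) := by
      apply hS.t_taut
      intro v hv hf
      show v (S.imp (S.imp (S.imp (S.imp (S.pr (S.imp (S.conIter s) S.fal)) S.fal) S.fal)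
        (S.imp (S.conIter s) S.fal))
        (S.imp (S.pr (S.imp (S.conIter s) S.fal)) (S.imp (S.conIter s) S.fal))) = true
      simp only [hv, hf]
      cases v (S.pr (S.imp (S.conIter s) S.fal)) <;> cases v (S.conIter s) <;> rfl
    exact hS.t_mp _ _ taut hT
end
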